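/- arXiv:2112.03454 — 2 statements merged into one kernel-verified Lean document; each statement's English description precedes it below -/
import Mathlib

section
/- CLUB with the true conditional likelihood is tight iff X and ω are independent: I_CLUB(X;ω) = I(X;ω) if and only if p(x,ω) = p(x)p(ω) for all x,ω. -/
open Finset

/-- Mutual information of a joint pmf on a product of finite sets (natural log). -/
noncomputable def mutualInfo {A B : Type*} [Fintype A] [Fintype B] (p : A → B → ℝ) : ℝ :=
  ∑ a, ∑ b, p a b * Real.log (p a b / ((∑ b', p a b') * (∑ a', p a' b)))

/-- The CLUB estimator (with the true conditional `p(x|ω) = p(x,ω)/p(ω)`). -/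
noncomputable def clubMI {X W : Type*} [Fintype X] [Fintype W] (p : X → W → ℝ) : ℝ :=
  (∑ x, ∑ w, p x w * Real.log (p x w / ∑ x', p x' w)) -
    ∑ x, ∑ w, (∑ w', p x w') * (∑ x', p x' w) * Real.log (p x w / ∑ x', p x' w)

/-!
`clubMI p - mutualInfo p` is exactly the Kullback–Leibler divergence `KL(p_X ⊗ p_ω ‖ p)` of the
joint law from the product of its marginals: the CLUB estimator overshoots the mutual information
by this divergence. Gibbs' inequality, in its equality case, then says the overshoot vanishes
precisely when `p = p_X ⊗ p_ω`.
-/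

open Real InformationTheory

section Gibbs

variable {ι : Type*} {s : Finset ι} {p q : ι → ℝ}

lemma sum_mul_klFun_div (hp : ∀ i ∈ s, p i ≠ 0) :
    ∑ i ∈ s, p i * klFun (q i / p i) =
      ∑ i ∈ s, q i * log (q i / p i) + ∑ i ∈ s, p i - ∑ i ∈ s, q i := by
  rw [← sum_add_distrib, ← sum_sub_distrib]
  refine sum_congr rfl fun i hi => ?_
  rw [klFun_apply]
  field_simp [hp i hi]

theorem sum_mul_log_div_eq_zero_iff (hp : ∀ i ∈ s, 0 < p i) (hq : ∀ i ∈ s, 0 ≤ q i)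
    (hsum : ∑ i ∈ s, q i = ∑ i ∈ s, p i) :
    ∑ i ∈ s, q i * log (q i / p i) = 0 ↔ ∀ i ∈ s, q i = p i := by
  have hkl : ∑ i ∈ s, q i * log (q i / p i) = ∑ i ∈ s, p i * klFun (q i / p i) := by
    rw [sum_mul_klFun_div fun i hi => (hp i hi).ne', hsum, add_sub_cancel_right]
  have hratio : ∀ i ∈ s, 0 ≤ q i / p i := fun i hi => div_nonneg (hq i hi) (hp i hi).le
  rw [hkl, sum_eq_zero_iff_of_nonneg fun i hi =>
    mul_nonneg (hp i hi).le (klFun_nonneg (hratio i hi))]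
  refine forall₂_congr fun i hi => ?_
  rw [mul_eq_zero, or_iff_right (hp i hi).ne', klFun_eq_zero_iff (hratio i hi),
    div_eq_one_iff_eq (hp i hi).ne']

end Gibbs

section Marginals

variable {X W : Type*} [Fintype X] [Fintype W] {p : X → W → ℝ}

lemma sum_sum_marginals_mul_eq_sum_sum_mul (hsum : ∑ x, ∑ w, p x w = 1) (f : X → ℝ) :
    ∑ x, ∑ w, (∑ w', p x w') * (∑ x', p x' w) * f x = ∑ x, ∑ w, p x w * f x := by
  have hW : ∑ w, ∑ x', p x' w = 1 := by rw [sum_comm, hsum]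
  refine sum_congr rfl fun x _ => ?_
  simp only [← sum_mul, ← mul_sum, hW, mul_one]

lemma marginals_pos (hp : ∀ x w, 0 < p x w) (hsum : ∑ x, ∑ w, p x w = 1) :
    (∀ x, 0 < ∑ w, p x w) ∧ ∀ w, 0 < ∑ x, p x w := by
  obtain ⟨x₀, -, hx₀⟩ := exists_ne_zero_of_sum_ne_zero (hsum.trans_ne one_ne_zero)
  obtain ⟨w₀, -, -⟩ := exists_ne_zero_of_sum_ne_zero hx₀
  have : Nonempty X := ⟨x₀⟩
  have : Nonempty W := ⟨w₀⟩
  exact ⟨fun x => sum_pos (fun w _ => hp x w) univ_nonempty,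
    fun w => sum_pos (fun x _ => hp x w) univ_nonempty⟩

theorem clubMI_sub_mutualInfo (hp : ∀ x w, 0 < p x w) (hsum : ∑ x, ∑ w, p x w = 1) :
    clubMI p - mutualInfo p =
      ∑ x, ∑ w, (∑ w', p x w') * (∑ x', p x' w) *
        log ((∑ w', p x w') * (∑ x', p x' w) / p x w) := by
  obtain ⟨hX, hW⟩ := marginals_pos hp hsum
  have hjoint : ∀ x w, p x w * log (p x w / ∑ x', p x' w) -
      p x w * log (p x w / ((∑ w', p x w') * ∑ x', p x' w)) = p x w * log (∑ w', p x w') := by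
    intro x w
    rw [log_div (hp x w).ne' (hW w).ne', log_div (hp x w).ne' (mul_pos (hX x) (hW w)).ne',
      log_mul (hX x).ne' (hW w).ne']
    ring
  have hproduct : ∀ x w, (∑ w', p x w') * (∑ x', p x' w) *
      log ((∑ w', p x w') * (∑ x', p x' w) / p x w) =
        (∑ w', p x w') * (∑ x', p x' w) * log (∑ w', p x w') -
          (∑ w', p x w') * (∑ x', p x' w) * log (p x w / ∑ x', p x' w) := by
    intro x w
    rw [log_div (mul_pos (hX x) (hW w)).ne' (hp x w).ne', log_div (hp x w).ne' (hW w).ne',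
      log_mul (hX x).ne' (hW w).ne']
    ring
  -- Both sides reduce to `log p_X` averaged over `p_X ⊗ p_ω` minus the CLUB cross term; for the
  -- first, the `p`- and `p_X ⊗ p_ω`-averages of a function of `x` alone coincide.
  unfold clubMI mutualInfo
  simp_rw [hproduct, sum_sub_distrib, sum_sum_marginals_mul_eq_sum_sum_mul hsum, ← hjoint,
    sum_sub_distrib]
  ring

end Marginals

/-- CLUB with the true conditional is tight iff `X` and `ω` are independent. -/
theorem club_eq_mutualInfo_iff_indep {X W : Type*} [Fintype X] [Fintype W]
    (p : X → W → ℝ) (hp : ∀ x w, 0 < p x w) (hsum : ∑ x, ∑ w, p x w = 1) :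
    clubMI p = mutualInfo p ↔
      ∀ x w, p x w = (∑ w', p x w') * (∑ x', p x' w) := by
  obtain ⟨hX, hW⟩ := marginals_pos hp hsum
  have hmass : ∑ i : X × W, (∑ w', p i.1 w') * (∑ x', p x' i.2) = ∑ i : X × W, p i.1 i.2 := by
    rw [Fintype.sum_prod_type' (f := fun x w => (∑ w', p x w') * (∑ x', p x' w)),
      Fintype.sum_prod_type' (f := p)]
    simpa using sum_sum_marginals_mul_eq_sum_sum_mul hsum fun _ => 1
  have hgibbs := sum_mul_log_div_eq_zero_iff (s := univ) (fun i _ => hp i.1 i.2)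
    (fun i _ => (mul_pos (hX i.1) (hW i.2)).le) hmass
  rw [← sub_eq_zero, clubMI_sub_mutualInfo hp hsum, ← Fintype.sum_prod_type' (f := fun x w =>
    (∑ w', p x w') * (∑ x', p x' w) * log ((∑ w', p x w') * (∑ x', p x' w) / p x w)), hgibbs]
  simp only [mem_univ, forall_const, Prod.forall, eq_comm]
end

section
/- The InfoNCE-style bound with N samples cannot exceed log N plus the Donsker–Varadhan gap; specifically, for any g > 0, E_{p(ω,y)}[log( g(ω,y) / ((1/N)Σ_{j=1}^N g(ω,j)) )] ≤ I(y;ω) + log N − log N = I(y;ω). -/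
/-!
Write `m ω` and `c y` for the marginals of `p` and `Z ω = ∑ⱼ c j * g ω j` for the average of
`g ω ·` under `c`. Reweighting gives a second joint distribution `q ω y = m ω * c y * g ω y / Z ω`
with the same `ω`-marginal as `p`, and pointwise
`log (g / Z) = log (p / (m * c)) + log (q / p)`.
Averaging under `p`, the first term gives the mutual information, and the second is at most
`∑ q - ∑ p = 0` by Gibbs' inequality `p * log (q / p) ≤ q - p`. For uniform `y`, `c y = 1 / N` and
`Z ω = (1 / N) * ∑ⱼ g ω j`.
-/

open Finset

open Real

lemma mul_log_div_le_sub {p q : ℝ} (hp : 0 ≤ p) (hq : 0 < q) : p * log (q / p) ≤ q - p := by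
  rcases hp.eq_or_lt with rfl | hp
  · simpa using hq.le
  calc p * log (q / p) ≤ p * (q / p - 1) :=
        mul_le_mul_of_nonneg_left (log_le_sub_one_of_pos (div_pos hq hp)) hp.le
    _ = q - p := by field_simp

lemma sum_mul_log_div_le_sum_sub {ι : Type*} (s : Finset ι) {p q : ι → ℝ}
    (hp : ∀ i ∈ s, 0 ≤ p i) (hq : ∀ i ∈ s, 0 < q i) :
    ∑ i ∈ s, p i * log (q i / p i) ≤ ∑ i ∈ s, q i - ∑ i ∈ s, p i := by
  rw [← sum_sub_distrib]
  exact sum_le_sum fun i hi => mul_log_div_le_sub (hp i hi) (hq i hi)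

theorem sum_mul_log_div_marginal_avg_le_mutualInfo {Ω Y : Type*} [Fintype Ω] [Fintype Y]
    (p : Ω → Y → ℝ) (hp : ∀ ω y, 0 ≤ p ω y) (hrow : ∀ ω, 0 < ∑ y, p ω y)
    (hcol : ∀ y, 0 < ∑ ω, p ω y) (g : Ω → Y → ℝ) (hg : ∀ ω y, 0 < g ω y) :
    ∑ ω, ∑ y, p ω y * log (g ω y / ∑ j, (∑ ω', p ω' j) * g ω j) ≤ mutualInfo p := by
  set m : Ω → ℝ := fun ω => ∑ y, p ω y
  set c : Y → ℝ := fun y => ∑ ω, p ω y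
  set Z : Ω → ℝ := fun ω => ∑ j, c j * g ω j
  set q : Ω → Y → ℝ := fun ω y => m ω * c y * g ω y / Z ω
  have hZ : ∀ ω, 0 < Z ω := fun ω =>
    sum_pos (fun j _ => mul_pos (hcol j) (hg ω j)) (nonempty_of_sum_ne_zero (hrow ω).ne')
  have hq : ∀ ω y, 0 < q ω y := fun ω y =>
    div_pos (mul_pos (mul_pos (hrow ω) (hcol y)) (hg ω y)) (hZ ω)
  have hq_row : ∀ ω, ∑ y, q ω y = m ω := fun ω => by
    simp only [q, ← sum_div, mul_assoc, ← mul_sum]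
    exact mul_div_cancel_right₀ _ (hZ ω).ne'
  have hsplit : ∀ ω y, p ω y * log (g ω y / Z ω)
      = p ω y * log (p ω y / (m ω * c y)) + p ω y * log (q ω y / p ω y) := fun ω y => by
    rcases (hp ω y).eq_or_lt with h0 | hpos
    · simp [← h0]
    have hm : 0 < m ω := hrow ω
    have hc : 0 < c y := hcol y
    have hgy := hg ω y
    have hZω := hZ ω
    rw [← mul_add, ← log_mul (by positivity) (by positivity)]
    congr 2
    simp only [q]
    field_simp
  calc ∑ ω, ∑ y, p ω y * log (g ω y / Z ω)
      = mutualInfo p + ∑ ω, ∑ y, p ω y * log (q ω y / p ω y) := by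
        simp only [hsplit, sum_add_distrib, mutualInfo]; rfl
    _ ≤ mutualInfo p + ∑ ω, (∑ y, q ω y - ∑ y, p ω y) := by
        gcongr with ω
        exact sum_mul_log_div_le_sum_sub _ (fun y _ => hp ω y) (fun y _ => hq ω y)
    _ = mutualInfo p := by simp [hq_row, m]

theorem infoNCE_le_mutualInfo_general {Ω : Type*} [Fintype Ω] {N : ℕ}
    (p : Ω → Fin N → ℝ) (hp : ∀ ω y, 0 ≤ p ω y)
    (hmargΩ : ∀ ω, 0 < ∑ y, p ω y)
    (huniform : ∀ y, ∑ ω, p ω y = 1 / N)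
    (g : Ω → Fin N → ℝ) (hg : ∀ ω y, 0 < g ω y) :
    ∑ ω, ∑ y, p ω y * Real.log (g ω y / ((1 / N : ℝ) * ∑ j, g ω j))
      ≤ mutualInfo p + Real.log N - Real.log N := by
  have hcol : ∀ y, 0 < ∑ ω, p ω y := fun y => by
    have := y.pos
    rw [huniform]
    positivity
  have havg : ∀ ω, ∑ j, (∑ ω', p ω' j) * g ω j = (1 / N : ℝ) * ∑ j, g ω j := fun ω => by
    simp only [huniform, mul_sum]
  rw [add_sub_cancel_right]
  simpa only [havg] using sum_mul_log_div_marginal_avg_le_mutualInfo p hp hmargΩ hcol g hg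

/-- InfoNCE-style bound with explicit `1/N` normalization: the `log N` terms
cancel and the bound is the mutual information itself. -/
theorem infoNCE_le_mutualInfo {Ω : Type*} [Fintype Ω] {N : ℕ} (hN : 0 < N)
    (p : Ω → Fin N → ℝ) (hp : ∀ ω y, 0 ≤ p ω y) (hsum : ∑ ω, ∑ y, p ω y = 1)
    (hmargΩ : ∀ ω, 0 < ∑ y, p ω y)
    (huniform : ∀ y, ∑ ω, p ω y = 1 / N)
    (g : Ω → Fin N → ℝ) (hg : ∀ ω y, 0 < g ω y) :
    ∑ ω, ∑ y, p ω y * Real.log (g ω y / ((1 / N : ℝ) * ∑ j, g ω j))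
      ≤ mutualInfo p + Real.log N - Real.log N :=
  infoNCE_le_mutualInfo_general p hp hmargΩ huniform g hg
end
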